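/- Let X be a compact Hausdorff space and let ℬ be a base for the closed sets of X that is closed under finite intersections. Then X is hereditarily indecomposable if and only if every pliand foursome (C,D,F,G) whose terms C, D, F, G all belong to ℬ admits a chicane. -/

import Mathlib

open Set Topology Function

/-!
If `X` is hereditarily indecomposable, separate `D` from `G ∪ C` by an open `V` and `C` from
`F ∪ closure V` by an open `U`. A component of `Vᶜ` through a point of `C` and a component of `Uᶜ`
through a point of `D` are disjoint, since neither can contain the other (`C ⊆ U`, `D ⊆ V`).
Compactness turns this into disjoint sets `X₀ ⊇ C` clopen in `Vᶜ` and `X₂ ⊇ D` clopen in `Uᶜ`.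
The frontier of `X₀` lies in `closure V`, which misses `G`, and that of `X₂` in `closure U`, which
misses `F`; so `X₀`, the closure of the complement of `X₀ ∪ X₂`, and `X₂` form a chicane.

Conversely, if subcontinua `A` and `B` meet while `a ∈ A \ B` and `b ∈ B \ A`, choose in the base
`G ⊇ A` missing `b`, `F ⊇ B` missing `a`, `C ∋ a` missing `F`, and `D ∋ b` missing `G ∪ C`. In a
chicane for `(C, D, F, G)` the continuum `A ⊆ G` cannot pass from `X₀` to `X₁ ∪ X₂`, so `A ⊆ X₀`;
symmetrically `B ⊆ X₂`, contradicting `X₀ ∩ X₂ = ∅`.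
-/

/-- A space is hereditarily indecomposable if whenever two subcontinua
(nonempty closed connected subsets) meet, one contains the other. -/
def HereditarilyIndecomposable (X : Type*) [TopologicalSpace X] : Prop :=
  ∀ A B : Set X, IsClosed A → IsConnected A → IsClosed B → IsConnected B →
    (A ∩ B).Nonempty → A ⊆ B ∨ B ⊆ A

section

variable {X : Type*} [TopologicalSpace X]

def IsChicane (C D F G X₀ X₁ X₂ : Set X) : Prop :=
  IsClosed X₀ ∧ IsClosed X₁ ∧ IsClosed X₂ ∧ X₀ ∪ X₁ ∪ X₂ = univ ∧ C ⊆ X₀ ∧ D ⊆ X₂ ∧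
    Disjoint (X₀ ∩ X₁) G ∧ Disjoint X₀ X₂ ∧ Disjoint (X₁ ∩ X₂) F

/-- For closed `Y`, this says that `Ω` is a clopen subset of the subspace `Y`. -/
def IsClopenIn (Y Ω : Set X) : Prop :=
  Ω ⊆ Y ∧ IsClosed Ω ∧ IsClosed (Y \ Ω)

theorem IsClosed.isClosed_connectedComponentIn {K : Set X} (hK : IsClosed K) (x : X) :
    IsClosed (connectedComponentIn K x) := by
  by_cases hx : x ∈ K
  · rw [connectedComponentIn_eq_image hx]
    exact hK.isClosedMap_subtype_val _ isClosed_connectedComponent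
  · rw [connectedComponentIn_eq_empty hx]
    exact isClosed_empty

section CompactT2

variable [CompactSpace X] [T2Space X]

theorem isClosed_biUnion_connectedComponent {K : Set X} (hK : IsClosed K) :
    IsClosed (⋃ x ∈ K, connectedComponent x) := by
  rw [← connectedComponents_preimage_image]
  exact (hK.isCompact.image ConnectedComponents.continuous_coe).isClosed.preimage
    ConnectedComponents.continuous_coe

/-- Passing to the totally disconnected quotient `ConnectedComponents X` reduces this to
`exists_clopen_of_closed_subset_open`. -/
theorem exists_clopen_of_connectedComponent_subset_open {K O : Set X} (hK : IsClosed K)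
    (hO : IsOpen O) (h : ∀ x ∈ K, connectedComponent x ⊆ O) :
    ∃ Ω : Set X, IsClopen Ω ∧ K ⊆ Ω ∧ Ω ⊆ O := by
  have hq := ConnectedComponents.continuous_coe (α := X)
  obtain ⟨W, hW, hKW, hWO⟩ := exists_clopen_of_closed_subset_open
    (hK.isCompact.image hq).isClosed (hO.isClosed_compl.isCompact.image hq).isClosed.isOpen_compl
    (by
      rintro _ ⟨x, hxK, rfl⟩ ⟨y, hyO, hyx⟩
      exact hyO (h x hxK (ConnectedComponents.coe_eq_coe'.1 hyx)))
  refine ⟨_, hW.preimage hq, image_subset_iff.1 hKW, fun x hx => ?_⟩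
  by_contra hxO
  exact hWO hx ⟨x, hxO, rfl⟩

theorem IsClosed.isClosed_biUnion_connectedComponentIn {Y K : Set X} (hY : IsClosed Y)
    (hK : IsClosed K) : IsClosed (⋃ x ∈ K, connectedComponentIn Y x) := by
  have := isCompact_iff_compactSpace.mp hY.isCompact
  have hunion : ⋃ x ∈ K, connectedComponentIn Y x =
      (↑) '' ⋃ y ∈ ((↑) ⁻¹' K : Set Y), connectedComponent y := by
    ext x
    simp only [mem_iUnion, mem_image, mem_preimage, exists_prop]
    constructor
    · rintro ⟨k, hk, hx⟩
      have hkY := connectedComponentIn_nonempty_iff.1 ⟨x, hx⟩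
      rw [connectedComponentIn_eq_image hkY] at hx
      obtain ⟨z, hz, rfl⟩ := hx
      exact ⟨z, ⟨⟨k, hkY⟩, hk, hz⟩, rfl⟩
    · rintro ⟨z, ⟨y, hy, hz⟩, rfl⟩
      exact ⟨y, hy, connectedComponentIn_eq_image y.2 ▸ ⟨z, hz, rfl⟩⟩
  rw [hunion]
  exact hY.isClosedMap_subtype_val _
    (isClosed_biUnion_connectedComponent (hK.preimage continuous_subtype_val))

theorem IsClosed.exists_isClopenIn_of_connectedComponentIn_subset {Y K O : Set X}
    (hY : IsClosed Y) (hK : IsClosed K) (hKY : K ⊆ Y) (hO : IsOpen O)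
    (h : ∀ x ∈ K, connectedComponentIn Y x ⊆ O) :
    ∃ Ω : Set X, IsClopenIn Y Ω ∧ K ⊆ Ω ∧ Ω ⊆ O := by
  have := isCompact_iff_compactSpace.mp hY.isCompact
  obtain ⟨Ω, hΩ, hKΩ, hΩO⟩ := exists_clopen_of_connectedComponent_subset_open
    (K := ((↑) : Y → X) ⁻¹' K) (O := ((↑) : Y → X) ⁻¹' O)
    (hK.preimage continuous_subtype_val) (hO.preimage continuous_subtype_val) fun y hy => by
      rw [← image_subset_iff, ← connectedComponentIn_eq_image y.2]
      exact h y hy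
  refine ⟨(↑) '' Ω, ⟨Subtype.coe_image_subset Y Ω, hY.isClosedMap_subtype_val _ hΩ.isClosed, ?_⟩,
    fun x hx => ⟨⟨x, hKY hx⟩, hKΩ hx, rfl⟩, image_subset_iff.2 hΩO⟩
  rw [← image_val_compl]
  exact hY.isClosedMap_subtype_val _ hΩ.compl.isClosed

theorem exists_disjoint_isClopenIn {K L C D : Set X} (hK : IsClosed K) (hL : IsClosed L)
    (hC : IsClosed C) (hD : IsClosed D) (hCK : C ⊆ K) (hDL : D ⊆ L)
    (h : ∀ c ∈ C, ∀ d ∈ D, Disjoint (connectedComponentIn K c) (connectedComponentIn L d)) :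
    ∃ X₀ X₂ : Set X, IsClopenIn K X₀ ∧ IsClopenIn L X₂ ∧ C ⊆ X₀ ∧ D ⊆ X₂ ∧ Disjoint X₀ X₂ := by
  obtain ⟨X₀, h₀, hCX₀, hX₀⟩ := hK.exists_isClopenIn_of_connectedComponentIn_subset hC hCK
    (hL.isClosed_biUnion_connectedComponentIn hD).isOpen_compl fun c hc =>
      subset_compl_iff_disjoint_right.2 (disjoint_iUnion₂_right.2 (h c hc))
  obtain ⟨X₂, h₂, hDX₂, hX₂⟩ := hL.exists_isClopenIn_of_connectedComponentIn_subset hD hDL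
    h₀.2.1.isOpen_compl fun d hd =>
      (subset_biUnion_of_mem (u := connectedComponentIn L) hd).trans (subset_compl_comm.1 hX₀)
  exact ⟨X₀, X₂, h₀, h₂, hCX₀, hDX₂, (subset_compl_iff_disjoint_right.1 hX₂).symm⟩

end CompactT2

theorem IsClopenIn.inter_closure_compl_subset {Y Ω : Set X} (h : IsClopenIn Y Ω) :
    Ω ∩ closure Ωᶜ ⊆ closure Yᶜ := by
  have hΩ : Ωᶜ = Yᶜ ∪ (Y \ Ω) := by
    ext x
    have := @h.1 x
    by_cases x ∈ Y <;> simp_all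
  rw [hΩ, closure_union, h.2.2.closure_eq, inter_union_distrib_left]
  exact union_subset inter_subset_right fun x hx => (hx.2.2 hx.1).elim

theorem isChicane_of_isClopenIn {Y Z C D F G X₀ X₂ : Set X} (h₀ : IsClopenIn Y X₀)
    (h₂ : IsClopenIn Z X₂) (hCX₀ : C ⊆ X₀) (hDX₂ : D ⊆ X₂) (h02 : Disjoint X₀ X₂)
    (hG : Disjoint (closure Yᶜ) G) (hF : Disjoint (closure Zᶜ) F) :
    IsChicane C D F G X₀ (closure (X₀ ∪ X₂)ᶜ) X₂ := by
  have hX₁ : closure (X₀ ∪ X₂)ᶜ ⊆ closure X₀ᶜ ∩ closure X₂ᶜ :=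
    subset_inter (closure_mono (compl_subset_compl.2 subset_union_left))
      (closure_mono (compl_subset_compl.2 subset_union_right))
  refine ⟨h₀.2.1, isClosed_closure, h₂.2.1, ?_, hCX₀, hDX₂, hG.mono_left ?_, h02,
    hF.mono_left ?_⟩
  · rw [union_right_comm]
    exact eq_univ_of_univ_subset
      ((union_compl_self _).symm.subset.trans (union_subset_union_right _ subset_closure))
  · exact (inter_subset_inter_right _ (hX₁.trans inter_subset_left)).trans
      h₀.inter_closure_compl_subset
  · rw [inter_comm]
    exact (inter_subset_inter_right _ (hX₁.trans inter_subset_right)).trans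
      h₂.inter_closure_compl_subset

theorem HereditarilyIndecomposable.disjoint_connectedComponentIn
    (hX : HereditarilyIndecomposable X) {K L : Set X} {x y : X} (hK : IsClosed K)
    (hL : IsClosed L) (hxK : x ∈ K) (hxL : x ∉ L) (hyL : y ∈ L) (hyK : y ∉ K) :
    Disjoint (connectedComponentIn K x) (connectedComponentIn L y) := by
  by_contra hne
  rcases hX _ _ (hK.isClosed_connectedComponentIn x) (isConnected_connectedComponentIn_iff.2 hxK)
    (hL.isClosed_connectedComponentIn y) (isConnected_connectedComponentIn_iff.2 hyL)
    (not_disjoint_iff_nonempty_inter.1 hne) with h | h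
  · exact hxL (connectedComponentIn_subset L y (h (mem_connectedComponentIn hxK)))
  · exact hyK (connectedComponentIn_subset K x (h (mem_connectedComponentIn hyL)))

theorem HereditarilyIndecomposable.exists_isChicane [CompactSpace X] [T2Space X]
    (hX : HereditarilyIndecomposable X) {C D F G : Set X} (hC : IsClosed C) (hD : IsClosed D)
    (hF : IsClosed F) (hG : IsClosed G) (hCD : Disjoint C D) (hCF : Disjoint C F)
    (hDG : Disjoint D G) : ∃ X₀ X₁ X₂, IsChicane C D F G X₀ X₁ X₂ := by
  obtain ⟨V, hV, hDV, hVGC⟩ := normal_exists_closure_subset hD (hG.union hC).isOpen_compl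
    (subset_compl_iff_disjoint_right.2 (disjoint_union_right.2 ⟨hDG, hCD.symm⟩))
  have hVG : Disjoint (closure V) G :=
    subset_compl_iff_disjoint_right.1 (hVGC.trans (compl_subset_compl.2 subset_union_left))
  have hVC : Disjoint (closure V) C :=
    subset_compl_iff_disjoint_right.1 (hVGC.trans (compl_subset_compl.2 subset_union_right))
  obtain ⟨U, hU, hCU, hUFV⟩ := normal_exists_closure_subset hC
    (hF.union isClosed_closure).isOpen_compl
    (subset_compl_iff_disjoint_right.2 (disjoint_union_right.2 ⟨hCF, hVC.symm⟩))
  have hUF : Disjoint (closure U) F :=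
    subset_compl_iff_disjoint_right.1 (hUFV.trans (compl_subset_compl.2 subset_union_left))
  have hCV : C ⊆ Vᶜ := fun c hc hcV => disjoint_left.1 hVC (subset_closure hcV) hc
  have hDU : D ⊆ Uᶜ := fun d hd hdU =>
    hUFV (subset_closure hdU) (Or.inr (subset_closure (hDV hd)))
  obtain ⟨X₀, X₂, h₀, h₂, hCX₀, hDX₂, h02⟩ := exists_disjoint_isClopenIn hV.isClosed_compl
    hU.isClosed_compl hC hD hCV hDU fun c hc d hd =>
      hX.disjoint_connectedComponentIn hV.isClosed_compl hU.isClosed_compl (hCV hc)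
        (not_not.2 (hCU hc)) (hDU hd) (not_not.2 (hDV hd))
  exact ⟨X₀, _, X₂, isChicane_of_isClopenIn h₀ h₂ hCX₀ hDX₂ h02
    (by rwa [compl_compl]) (by rwa [compl_compl])⟩

/-- The members of `ℬ` containing `P` form a family directed by `⊇` whose intersection is `P`,
so compactness of `K` yields one of them missing `K`. -/
theorem exists_mem_superset_disjoint_of_isCompact {ℬ : Set (Set X)}
    (hclosed : ∀ A ∈ ℬ, IsClosed A) (hbase : ∀ F : Set X, IsClosed F → ∃ S ⊆ ℬ, F = ⋂₀ S)
    (hinter : ∀ A ∈ ℬ, ∀ B ∈ ℬ, A ∩ B ∈ ℬ) {P K : Set X} (hP : IsClosed P) (hK : IsCompact K)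
    (hKne : K.Nonempty) (hPK : Disjoint P K) : ∃ T ∈ ℬ, P ⊆ T ∧ Disjoint T K := by
  obtain ⟨S, hSℬ, rfl⟩ := hbase P hP
  obtain ⟨T₀, hT₀⟩ : S.Nonempty := nonempty_iff_ne_empty.2 fun hS => by
    simp [hS, hKne.ne_empty] at hPK
  have : Nonempty {T // T ∈ ℬ ∧ ⋂₀ S ⊆ T} := ⟨⟨T₀, hSℬ hT₀, sInter_subset_of_mem hT₀⟩⟩
  obtain ⟨⟨T, hTℬ, hST⟩, hTK⟩ := hK.elim_directed_family_closed
    (fun T : {T // T ∈ ℬ ∧ ⋂₀ S ⊆ T} => T.1) (fun T => hclosed _ T.2.1)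
    (by
      refine disjoint_iff_inter_eq_empty.1 (hPK.symm.mono_right fun x hx => ?_)
      exact mem_sInter.2 fun T hT => mem_iInter.1 hx ⟨T, hSℬ hT, sInter_subset_of_mem hT⟩)
    fun T₁ T₂ => ⟨⟨T₁.1 ∩ T₂.1, hinter _ T₁.2.1 _ T₂.2.1, subset_inter T₁.2.2 T₂.2.2⟩,
      inter_subset_left, inter_subset_right⟩
  exact ⟨T, hTℬ, hST, disjoint_iff_inter_eq_empty.2 (by rwa [inter_comm])⟩

theorem IsPreconnected.subset_left_of_subset_union_of_isClosed {s u v : Set X}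
    (hs : IsPreconnected s) (hu : IsClosed u) (hv : IsClosed v) (huv : Disjoint (s ∩ u) v)
    (hsuv : s ⊆ u ∪ v) (hsu : (s ∩ u).Nonempty) : s ⊆ u := by
  intro x hx
  by_contra hxu
  obtain ⟨y, hys, hyu, hyv⟩ := isPreconnected_closed_iff.1 hs u v hu hv hsuv hsu
    ⟨x, hx, (hsuv hx).resolve_left hxu⟩
  exact disjoint_left.1 huv ⟨hys, hyu⟩ hyv

theorem IsChicane.symm {C D F G X₀ X₁ X₂ : Set X} (h : IsChicane C D F G X₀ X₁ X₂) :
    IsChicane D C G F X₂ X₁ X₀ := by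
  obtain ⟨h₀, h₁, h₂, hcover, hCX₀, hDX₂, h01G, h02, h12F⟩ := h
  refine ⟨h₂, h₁, h₀, ?_, hDX₂, hCX₀, inter_comm X₁ X₂ ▸ h12F, h02.symm,
    inter_comm X₀ X₁ ▸ h01G⟩
  rw [← hcover]
  ac_rfl

theorem IsChicane.subset_left_of_isPreconnected {C D F G X₀ X₁ X₂ A : Set X}
    (h : IsChicane C D F G X₀ X₁ X₂) (hA : IsPreconnected A) (hAG : A ⊆ G)
    (hAC : (A ∩ C).Nonempty) : A ⊆ X₀ := by
  obtain ⟨h₀, h₁, h₂, hcover, hCX₀, -, h01G, h02, -⟩ := h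
  refine hA.subset_left_of_subset_union_of_isClosed h₀ (h₁.union h₂) ?_
    (fun x _ => by rw [← union_assoc, hcover]; exact mem_univ x)
    (hAC.mono (inter_subset_inter_right A hCX₀))
  exact disjoint_left.2 fun x ⟨hxA, hx₀⟩ hx₁₂ => hx₁₂.elim
    (fun hx₁ => disjoint_left.1 h01G ⟨hx₀, hx₁⟩ (hAG hxA)) (disjoint_left.1 h02 hx₀)

theorem hereditarilyIndecomposable_of_forall_exists_isChicane [CompactSpace X] [T1Space X]
    {ℬ : Set (Set X)} (hclosed : ∀ A ∈ ℬ, IsClosed A)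
    (hbase : ∀ F : Set X, IsClosed F → ∃ S ⊆ ℬ, F = ⋂₀ S)
    (hinter : ∀ A ∈ ℬ, ∀ B ∈ ℬ, A ∩ B ∈ ℬ)
    (h : ∀ C D F G : Set X, C ∈ ℬ → D ∈ ℬ → F ∈ ℬ → G ∈ ℬ →
      Disjoint C D → Disjoint C F → Disjoint D G → ∃ X₀ X₁ X₂, IsChicane C D F G X₀ X₁ X₂) :
    HereditarilyIndecomposable X := by
  intro A B hA hAconn hB hBconn ⟨p, hpA, hpB⟩
  by_contra! hAB
  obtain ⟨a, haA, haB⟩ := not_subset.1 hAB.1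
  obtain ⟨b, hbB, hbA⟩ := not_subset.1 hAB.2
  have separate {P K : Set X} := exists_mem_superset_disjoint_of_isCompact (P := P) (K := K)
    hclosed hbase hinter
  obtain ⟨G, hG, hAG, hGb⟩ := separate hA isCompact_singleton (singleton_nonempty b)
    (disjoint_singleton_right.2 hbA)
  obtain ⟨F, hF, hBF, hFa⟩ := separate hB isCompact_singleton (singleton_nonempty a)
    (disjoint_singleton_right.2 haB)
  obtain ⟨C, hC, haC, hCF⟩ := separate isClosed_singleton (hclosed F hF).isCompact
    ⟨b, hBF hbB⟩ (disjoint_singleton_left.2 (disjoint_singleton_right.1 hFa))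
  obtain ⟨D, hD, hbD, hDGC⟩ := separate isClosed_singleton
    ((hclosed G hG).union (hclosed C hC)).isCompact ⟨a, Or.inr (singleton_subset_iff.1 haC)⟩
    (disjoint_singleton_left.2 fun hb => hb.elim (disjoint_singleton_right.1 hGb)
      fun hbC => disjoint_left.1 hCF hbC (hBF hbB))
  obtain ⟨hDG, hDC⟩ := disjoint_union_right.1 hDGC
  obtain ⟨X₀, X₁, X₂, hch⟩ := h C D F G hC hD hF hG hDC.symm hCF hDG
  have hAX₀ := hch.subset_left_of_isPreconnected hAconn.isPreconnected hAG
    ⟨a, haA, singleton_subset_iff.1 haC⟩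
  have hBX₂ := hch.symm.subset_left_of_isPreconnected hBconn.isPreconnected hBF
    ⟨b, hbB, singleton_subset_iff.1 hbD⟩
  obtain ⟨-, -, -, -, -, -, -, h02, -⟩ := hch
  exact disjoint_left.1 h02 (hAX₀ hpA) (hBX₂ hpB)

end

/-- Let `ℬ` be a base for the closed sets of a compact Hausdorff space `X` that is
closed under finite intersections.  Then `X` is hereditarily indecomposable iff every
pliand foursome `(C,D,F,G)` with terms in `ℬ` admits a chicane. -/
theorem hereditarilyIndecomposable_iff_chicane_on_base
    (X : Type*) [TopologicalSpace X] [CompactSpace X] [T2Space X]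
    (ℬ : Set (Set X))
    (hclosed : ∀ A ∈ ℬ, IsClosed A)
    (hbase : ∀ F : Set X, IsClosed F → ∃ S ⊆ ℬ, F = ⋂₀ S)
    (hinter : ∀ A ∈ ℬ, ∀ B ∈ ℬ, A ∩ B ∈ ℬ) :
    HereditarilyIndecomposable X ↔
      ∀ C D F G : Set X, C ∈ ℬ → D ∈ ℬ → F ∈ ℬ → G ∈ ℬ →
        C ∩ D = ∅ → C ∩ F = ∅ → D ∩ G = ∅ →
        ∃ X₀ X₁ X₂ : Set X,
          IsClosed X₀ ∧ IsClosed X₁ ∧ IsClosed X₂ ∧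
          X₀ ∪ X₁ ∪ X₂ = Set.univ ∧
          C ⊆ X₀ ∧ D ⊆ X₂ ∧
          X₀ ∩ X₁ ∩ G = ∅ ∧ X₀ ∩ X₂ = ∅ ∧ X₁ ∩ X₂ ∩ F = ∅ := by
  simp only [← disjoint_iff_inter_eq_empty]
  refine ⟨fun hX C D F G hC hD hF hG => ?_, hereditarilyIndecomposable_of_forall_exists_isChicane
    hclosed hbase hinter⟩
  exact hX.exists_isChicane (hclosed C hC) (hclosed D hD) (hclosed F hF) (hclosed G hG)
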